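/- arXiv:2206.01666 — 5 statements merged into one kernel-verified Lean document; each statement's English description precedes it below -/
import Mathlib

section
/- For every τ > 0, every n ≥ 1 and all x, x' ∈ ℝⁿ, the regularized softmax satisfies ‖S_τ(x) − S_τ(x')‖₁ ≤ (1/τ)‖x − x'‖_∞; that is, S_τ is (1/τ)-Lipschitz as a map from (ℝⁿ, ‖·‖_∞) to (ℝⁿ, ‖·‖₁). -/
/-!
Along the segment `s ↦ x' + s • v` with `v = x - x'`, the derivative of `softmax τ` is
`i ↦ p i * (v i - ∑ j, p j * v j) / τ`, where `p` is the current softmax vector. Its `ℓ¹` norm is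
`1/τ` times the `p`-weighted mean absolute deviation of `v`, which by Cauchy–Schwarz is at most the
`p`-standard deviation of `v`, hence at most `‖v‖_∞`. The mean value inequality in `ℓ¹` concludes.
-/

open Finset Real

section WeightedMean

variable {ι : Type*} [Fintype ι] {p v : ι → ℝ}

lemma sum_mul_sub_weighted_mean_sq (hp : ∑ i, p i = 1) :
    ∑ i, p i * (v i - ∑ j, p j * v j) ^ 2 = ∑ i, p i * v i ^ 2 - (∑ j, p j * v j) ^ 2 := by
  set m := ∑ j, p j * v j
  have hexpand : ∑ i, p i * (v i - m) ^ 2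
      = ∑ i, p i * v i ^ 2 - 2 * m * ∑ i, p i * v i + m ^ 2 * ∑ i, p i := by
    simp only [mul_sum, ← sum_sub_distrib, ← sum_add_distrib]
    exact sum_congr rfl fun i _ => by ring
  rw [hexpand, hp]
  ring

lemma sum_mul_abs_sub_weighted_mean_le {M : ℝ} (hp0 : ∀ i, 0 ≤ p i) (hp : ∑ i, p i = 1)
    (hM : 0 ≤ M) (hv : ∀ i, |v i| ≤ M) :
    ∑ i, p i * |v i - ∑ j, p j * v j| ≤ M := by
  set m := ∑ j, p j * v j
  have hcauchy : (∑ i, p i * |v i - m|) ^ 2 ≤ ∑ i, p i * (v i - m) ^ 2 := by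
    have := sum_sq_le_sum_mul_sum_of_sq_le_mul univ (r := fun i => p i * |v i - m|)
      (fun i _ => hp0 i) (fun i _ => mul_nonneg (hp0 i) (sq_nonneg (v i - m)))
      (fun i _ => le_of_eq (by rw [mul_pow, sq_abs]; ring))
    rwa [hp, one_mul] at this
  have hmoment : ∑ i, p i * v i ^ 2 ≤ M ^ 2 := calc
    ∑ i, p i * v i ^ 2 ≤ ∑ i, p i * M ^ 2 :=
      sum_le_sum fun i _ =>
        mul_le_mul_of_nonneg_left (sq_le_sq.mpr ((hv i).trans (le_abs_self M))) (hp0 i)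
    _ = M ^ 2 := by rw [← sum_mul, hp, one_mul]
  have hvar : (∑ i, p i * |v i - m|) ^ 2 ≤ M ^ 2 := by
    rw [sum_mul_sub_weighted_mean_sq hp] at hcauchy
    linarith [sq_nonneg m]
  exact (pow_le_pow_iff_left₀ (sum_nonneg fun i _ => mul_nonneg (hp0 i) (abs_nonneg _)) hM
    two_ne_zero).mp hvar

end WeightedMean

lemma sum_abs_sub_le_of_hasDerivAt {ι : Type*} [Fintype ι] {f f' : ℝ → ι → ℝ} {C : ℝ}
    (hf : ∀ t ∈ Set.Icc (0 : ℝ) 1, HasDerivAt f (f' t) t)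
    (hC : ∀ t ∈ Set.Ico (0 : ℝ) 1, ∑ i, |f' t i| ≤ C) :
    ∑ i, |f 1 i - f 0 i| ≤ C := by
  let e := (PiLp.continuousLinearEquiv 1 ℝ fun _ : ι => ℝ).symm
  have h := norm_image_sub_le_of_norm_deriv_le_segment_01' (f := fun t => e (f t))
    (fun t ht => (e.hasFDerivAt.comp_hasDerivAt t (hf t ht)).hasDerivWithinAt)
    (fun t ht => (PiLp.norm_eq_of_L1 _).trans_le (hC t ht))
  rwa [PiLp.norm_eq_of_L1] at h

section Softmax

variable {ι : Type*} [Fintype ι]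

noncomputable def softmax (τ : ℝ) (x : ι → ℝ) (i : ι) : ℝ :=
  exp (x i / τ) / ∑ j, exp (x j / τ)

variable [Nonempty ι] (τ : ℝ)

lemma sum_exp_div_pos (x : ι → ℝ) : 0 < ∑ j, exp (x j / τ) :=
  sum_pos (fun _ _ => exp_pos _) univ_nonempty

lemma softmax_nonneg (x : ι → ℝ) (i : ι) : 0 ≤ softmax τ x i :=
  div_nonneg (exp_pos _).le (sum_exp_div_pos τ x).le

lemma sum_softmax (x : ι → ℝ) : ∑ i, softmax τ x i = 1 := by
  simp only [softmax, ← sum_div]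
  exact div_self (sum_exp_div_pos τ x).ne'

lemma hasDerivAt_softmax_comp {γ : ℝ → ι → ℝ} {γ' : ι → ℝ} {t : ℝ} (hγ : HasDerivAt γ γ' t) :
    HasDerivAt (fun s => softmax τ (γ s))
      (fun i => softmax τ (γ t) i * (γ' i - ∑ j, softmax τ (γ t) j * γ' j) / τ) t := by
  have hexp : ∀ i, HasDerivAt (fun s => exp (γ s i / τ)) (exp (γ t i / τ) * (γ' i / τ)) t :=
    fun i => ((hasDerivAt_pi.mp hγ i).div_const τ).exp
  have hZ := HasDerivAt.fun_sum (u := univ) fun i _ => hexp i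
  rw [hasDerivAt_pi]
  intro i
  have hZ0 := (sum_exp_div_pos τ (γ t)).ne'
  refine ((hexp i).fun_div hZ hZ0).congr_deriv ?_
  simp only [softmax, div_mul_eq_mul_div, ← sum_div, mul_div_assoc']
  field_simp

lemma sum_abs_softmax_sub_le {x x' : ι → ℝ} {M : ℝ} (hτ : 0 < τ) (hM : ∀ i, |x i - x' i| ≤ M) :
    ∑ i, |softmax τ x i - softmax τ x' i| ≤ M / τ := by
  have hM0 : 0 ≤ M := (abs_nonneg _).trans (hM (Classical.arbitrary ι))
  have hγ : ∀ t : ℝ, HasDerivAt (fun s : ℝ => x' + s • (x - x')) (x - x') t := fun t =>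
    (((hasDerivAt_id' t).smul_const (x - x')).const_add x').congr_deriv (one_smul ℝ _)
  have hderiv_bound : ∀ y : ι → ℝ,
      ∑ i, |softmax τ y i * ((x - x') i - ∑ j, softmax τ y j * (x - x') j) / τ| ≤ M / τ := by
    intro y
    simp only [abs_div, abs_of_pos hτ, abs_mul, abs_of_nonneg (softmax_nonneg τ _ _), ← sum_div]
    gcongr
    exact sum_mul_abs_sub_weighted_mean_le (softmax_nonneg τ _) (sum_softmax τ _) hM0 hM
  simpa using sum_abs_sub_le_of_hasDerivAt (fun t _ => hasDerivAt_softmax_comp τ (hγ t))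
    (fun t _ => hderiv_bound _)

end Softmax

/-- For every `τ > 0`, `n ≥ 1` and `x, x' : Fin n → ℝ`, the regularized
softmax `S_τ(x) i = exp (x i / τ) / ∑ j, exp (x j / τ)` satisfies
`‖S_τ x - S_τ x'‖₁ ≤ (1/τ) * ‖x - x'‖_∞`. -/
theorem stmt_0 (τ : ℝ) (hτ : 0 < τ) (n : ℕ) (hn : 1 ≤ n) (x x' : Fin n → ℝ) :
    ∑ i, |Real.exp (x i / τ) / (∑ j, Real.exp (x j / τ)) -
          Real.exp (x' i / τ) / (∑ j, Real.exp (x' j / τ))|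
      ≤ (1 / τ) *
        (Finset.univ.sup' ⟨⟨0, hn⟩, Finset.mem_univ _⟩ fun i => |x i - x' i|) := by
  have : Nonempty (Fin n) := ⟨⟨0, hn⟩⟩
  rw [one_div_mul_eq_div]
  exact sum_abs_softmax_sub_le τ hτ fun i => le_sup' (fun i => |x i - x' i|) (mem_univ i)
end

section
/- Let a ∈ ℝⁿ be a probability vector (a_i ≥ 0 for all i and Σ_{i=1}^n a_i = 1), and let v ∈ ℝⁿ satisfy ‖v‖_∞ ≤ 1. Then Σ_{i ≠ j} a_i a_j |v_i − v_j| ≤ 1. -/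
lemma key_ineq (x y : ℝ) (hx : |x| ≤ 1) (hy : |y| ≤ 1) : |x - y| ≤ 1 - x * y := by
  rw [abs_le] at hx hy
  rcases abs_cases (x - y) with ⟨h, _⟩ | ⟨h, _⟩ <;> nlinarith [hx.1, hx.2, hy.1, hy.2]

theorem stmt_2 (n : ℕ) (a v : Fin n → ℝ)
    (ha : ∀ i, 0 ≤ a i) (hsum : ∑ i, a i = 1)
    (hv : ∀ i, |v i| ≤ 1) :
    ∑ i, ∑ j ∈ Finset.univ.erase i, a i * a j * |v i - v j| ≤ 1 := by
  have hterm : ∀ i j : Fin n, 0 ≤ a i * a j * (1 - v i * v j) := by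
    intro i j
    have h1 : |v i * v j| ≤ 1 := by
      rw [abs_mul]
      exact mul_le_one₀ (hv i) (abs_nonneg _) (hv j)
    have := (abs_le.mp h1).2
    have := mul_nonneg (ha i) (ha j)
    nlinarith
  calc ∑ i, ∑ j ∈ Finset.univ.erase i, a i * a j * |v i - v j|
      ≤ ∑ i, ∑ j ∈ Finset.univ.erase i, a i * a j * (1 - v i * v j) := by
        refine Finset.sum_le_sum fun i _ => Finset.sum_le_sum fun j _ => ?_
        exact mul_le_mul_of_nonneg_left (key_ineq _ _ (hv i) (hv j))
          (mul_nonneg (ha i) (ha j))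
    _ ≤ ∑ i, ∑ j, a i * a j * (1 - v i * v j) := by
        refine Finset.sum_le_sum fun i _ => ?_
        exact Finset.sum_le_sum_of_subset_of_nonneg (Finset.erase_subset _ _)
          (fun j _ _ => hterm i j)
    _ = (∑ i, a i) * (∑ j, a j) - (∑ i, a i * v i) ^ 2 := by
        rw [Finset.sum_mul_sum, sq, Finset.sum_mul_sum]
        rw [← Finset.sum_sub_distrib]
        refine Finset.sum_congr rfl fun i _ => ?_
        rw [← Finset.sum_sub_distrib]
        refine Finset.sum_congr rfl fun j _ => ?_
        ring
    _ ≤ 1 := by rw [hsum]; nlinarith [sq_nonneg (∑ i, a i * v i)]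
end

section
/- Let m ≥ 1 and L > 0, let f : ℝ^m → ℝ be differentiable with L-Lipschitz gradient on the nonnegative orthant ℝ^m_+, and let λ* ∈ ℝ^m_+ satisfy f(λ*) ≤ f(μ) for all μ ∈ ℝ^m_+. Then for every λ ∈ ℝ^m_+, ‖[−∇f(λ)]₊‖₂² ≤ 2L·(f(λ) − f(λ*)). -/
/-!
Along the segment from `x` to `y` the function
`t ↦ f (x + t • (y - x)) - t ⟪∇f x, y - x⟫ - L t² ‖y - x‖² / 2` has nonpositive derivative on
`[0, 1]` by Cauchy–Schwarz and the Lipschitz bound, which gives the descent lemma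
`f y ≤ f x + ⟪∇f x, y - x⟫ + L/2 ‖y - x‖²` on any convex set where `∇f` is `L`-Lipschitz.
The direction `v = [-∇f λ]₊` satisfies `⟪∇f λ, v⟫ = -‖v‖²` and the step `λ + v / L` stays in the
orthant, so the descent lemma gives `f λ* ≤ f (λ + v / L) ≤ f λ - ‖v‖² / (2L)`.
-/

open scoped RealInnerProductSpace

section Descent

variable {E : Type*} [NormedAddCommGroup E] [InnerProductSpace ℝ E] [CompleteSpace E]
  {f : E → ℝ} {s : Set E} {L : ℝ}

theorem Differentiable.hasDerivAt_comp_add_smul (hf : Differentiable ℝ f) (x d : E) (t : ℝ) :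
    HasDerivAt (fun t : ℝ => f (x + t • d)) ⟪gradient f (x + t • d), d⟫ t := by
  have hline : HasDerivAt (fun t : ℝ => x + t • d) d t := by
    simpa using ((hasDerivAt_id t).smul_const d).const_add x
  have := (hf (x + t • d)).hasGradientAt.hasFDerivAt.comp_hasDerivAt t hline
  rwa [InnerProductSpace.toDual_apply_apply] at this

theorem Convex.le_add_inner_gradient_add_sq (hs : Convex ℝ s) (hf : Differentiable ℝ f)
    (hlip : ∀ x ∈ s, ∀ y ∈ s, ‖gradient f x - gradient f y‖ ≤ L * ‖x - y‖)
    {x y : E} (hx : x ∈ s) (hy : y ∈ s) :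
    f y ≤ f x + ⟪gradient f x, y - x⟫ + L / 2 * ‖y - x‖ ^ 2 := by
  set d := y - x
  set h : ℝ → ℝ := fun t => f (x + t • d) - t * ⟪gradient f x, d⟫ - L / 2 * t ^ 2 * ‖d‖ ^ 2
  have hderiv : ∀ t,
      HasDerivAt h (⟪gradient f (x + t • d) - gradient f x, d⟫ - L * t * ‖d‖ ^ 2) t := by
    intro t
    refine (((hf.hasDerivAt_comp_add_smul x d t).sub ((hasDerivAt_id t).mul_const _)).sub
      (((hasDerivAt_pow 2 t).const_mul (L / 2)).mul_const (‖d‖ ^ 2))).congr_deriv ?_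
    rw [inner_sub_left]
    simp only [Nat.cast_ofNat]
    ring
  have hderiv_nonpos : ∀ t ∈ interior (Set.Icc (0 : ℝ) 1),
      ⟪gradient f (x + t • d) - gradient f x, d⟫ - L * t * ‖d‖ ^ 2 ≤ 0 := by
    intro t ht
    rw [interior_Icc] at ht
    have hmem : x + t • d ∈ s := hs.add_smul_sub_mem hx hy (Set.Ioo_subset_Icc_self ht)
    refine sub_nonpos.2 ?_
    calc ⟪gradient f (x + t • d) - gradient f x, d⟫
        ≤ ‖gradient f (x + t • d) - gradient f x‖ * ‖d‖ := real_inner_le_norm _ _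
      _ ≤ L * ‖t • d‖ * ‖d‖ := by
          gcongr
          simpa using hlip _ hmem x hx
      _ = L * t * ‖d‖ ^ 2 := by rw [norm_smul, Real.norm_of_nonneg ht.1.le]; ring
  have hanti : AntitoneOn h (Set.Icc 0 1) :=
    antitoneOn_of_hasDerivWithinAt_nonpos (convex_Icc 0 1)
      (fun t _ => (hderiv t).continuousAt.continuousWithinAt)
      (fun t _ => (hderiv t).hasDerivWithinAt) hderiv_nonpos
  have := hanti (Set.left_mem_Icc.2 zero_le_one) (Set.right_mem_Icc.2 zero_le_one) zero_le_one
  simp only [h, d, one_smul, zero_smul, add_zero, one_pow, one_mul, zero_mul, add_sub_cancel,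
    sub_zero, mul_one] at this
  linarith

theorem Convex.le_sub_sq_norm_div_of_inner_gradient_eq (hs : Convex ℝ s)
    (hf : Differentiable ℝ f)
    (hlip : ∀ x ∈ s, ∀ y ∈ s, ‖gradient f x - gradient f y‖ ≤ L * ‖x - y‖) (hL : 0 < L)
    {x v : E} (hx : x ∈ s) (hstep : x + L⁻¹ • v ∈ s) (hv : ⟪gradient f x, v⟫ = -‖v‖ ^ 2) :
    f (x + L⁻¹ • v) ≤ f x - ‖v‖ ^ 2 / (2 * L) := by
  have hdescent := hs.le_add_inner_gradient_add_sq hf hlip hx hstep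
  rw [add_sub_cancel_left, real_inner_smul_right, hv, norm_smul,
    Real.norm_of_nonneg (inv_nonneg.2 hL.le)] at hdescent
  calc f (x + L⁻¹ • v) ≤ f x + L⁻¹ * -‖v‖ ^ 2 + L / 2 * (L⁻¹ * ‖v‖) ^ 2 := hdescent
    _ = f x - ‖v‖ ^ 2 / (2 * L) := by field_simp; ring

end Descent

section Orthant

variable {ι : Type*}

def nonnegOrthant (ι : Type*) : Set (EuclideanSpace ℝ ι) := {x | ∀ i, 0 ≤ x i}

theorem convex_nonnegOrthant : Convex ℝ (nonnegOrthant ι) := by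
  intro x hx y hy a b ha hb _ i
  simpa using add_nonneg (mul_nonneg ha (hx i)) (mul_nonneg hb (hy i))

/-- The paper's `[-g]₊`. -/
noncomputable def EuclideanSpace.negPart (g : EuclideanSpace ℝ ι) : EuclideanSpace ℝ ι :=
  WithLp.toLp 2 fun i => max (-g i) 0

namespace EuclideanSpace

@[simp]
theorem negPart_apply (g : EuclideanSpace ℝ ι) (i : ι) : negPart g i = max (-g i) 0 := rfl

theorem norm_negPart_sq [Fintype ι] (g : EuclideanSpace ℝ ι) :
    ‖negPart g‖ ^ 2 = ∑ i, max (-g i) 0 ^ 2 := by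
  simp [real_norm_sq_eq]

theorem inner_negPart [Fintype ι] (g : EuclideanSpace ℝ ι) :
    ⟪g, negPart g⟫ = -‖negPart g‖ ^ 2 := by
  rw [real_norm_sq_eq, ← Finset.sum_neg_distrib, PiLp.inner_apply]
  refine Finset.sum_congr rfl fun i _ => ?_
  rcases le_total 0 (g i) with hgi | hgi
  · simp [hgi]
  · simp [hgi]; ring

theorem add_smul_negPart_mem_nonnegOrthant {x : EuclideanSpace ℝ ι} (hx : x ∈ nonnegOrthant ι)
    (g : EuclideanSpace ℝ ι) {c : ℝ} (hc : 0 ≤ c) : x + c • negPart g ∈ nonnegOrthant ι := by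
  intro i
  simpa using add_nonneg (hx i) (mul_nonneg hc (le_max_right (-g i) 0))

end EuclideanSpace

end Orthant

theorem stmt_5_general (m : ℕ) (L : ℝ) (hL : 0 < L)
    (f : EuclideanSpace ℝ (Fin m) → ℝ) (hf : Differentiable ℝ f)
    (hlip : ∀ x : EuclideanSpace ℝ (Fin m), (∀ i, 0 ≤ x i) →
      ∀ y : EuclideanSpace ℝ (Fin m), (∀ i, 0 ≤ y i) →
      ‖gradient f x - gradient f y‖ ≤ L * ‖x - y‖)
    (lstar : EuclideanSpace ℝ (Fin m))
    (hmin : ∀ μ : EuclideanSpace ℝ (Fin m), (∀ i, 0 ≤ μ i) → f lstar ≤ f μ)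
    (lam : EuclideanSpace ℝ (Fin m)) (hlam : ∀ i, 0 ≤ lam i) :
    ∑ i, (max (-(gradient f lam i)) 0) ^ 2 ≤ 2 * L * (f lam - f lstar) := by
  set v := EuclideanSpace.negPart (gradient f lam)
  have hstep : lam + L⁻¹ • v ∈ nonnegOrthant (Fin m) :=
    EuclideanSpace.add_smul_negPart_mem_nonnegOrthant hlam _ (inv_nonneg.2 hL.le)
  have hdescent := convex_nonnegOrthant.le_sub_sq_norm_div_of_inner_gradient_eq hf hlip hL hlam
    hstep (EuclideanSpace.inner_negPart _)
  have hgap : ‖v‖ ^ 2 / (2 * L) ≤ f lam - f lstar := by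
    linarith [hmin _ hstep]
  rw [← EuclideanSpace.norm_negPart_sq]
  rwa [div_le_iff₀ (by positivity), mul_comm] at hgap

theorem stmt_5 (m : ℕ) (hm : 1 ≤ m) (L : ℝ) (hL : 0 < L)
    (f : EuclideanSpace ℝ (Fin m) → ℝ) (hf : Differentiable ℝ f)
    (hlip : ∀ x : EuclideanSpace ℝ (Fin m), (∀ i, 0 ≤ x i) →
      ∀ y : EuclideanSpace ℝ (Fin m), (∀ i, 0 ≤ y i) →
      ‖gradient f x - gradient f y‖ ≤ L * ‖x - y‖)
    (lstar : EuclideanSpace ℝ (Fin m)) (hstar : ∀ i, 0 ≤ lstar i)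
    (hmin : ∀ μ : EuclideanSpace ℝ (Fin m), (∀ i, 0 ≤ μ i) → f lstar ≤ f μ)
    (lam : EuclideanSpace ℝ (Fin m)) (hlam : ∀ i, 0 ≤ lam i) :
    ∑ i, (max (-(gradient f lam i)) 0) ^ 2 ≤ 2 * L * (f lam - f lstar) :=
  stmt_5_general m L hL f hf hlip lstar hmin lam hlam
end

section
/- Let m ≥ 1, L > 0, a ∈ ℝ^m, and let λ ∈ ℝ^m_+ (the nonnegative orthant). Define λ' := [λ − (1/L)·a]₊. Then (1/(2L))·‖[−a]₊‖₂² ≤ ⟨a, λ − λ'⟩ − (L/2)·‖λ − λ'‖₂². -/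
/-! The inequality splits into one inequality per coordinate. If the projection onto `[0, ∞)` is
inactive, the step is `b / L` and the gain is `b² / (2L) ≥ [-b]₊² / (2L)`. If it clips to `0`, then
`b ≥ L x ≥ 0`, so the left side vanishes and the gain `x (b - L x / 2)` is nonnegative. -/

theorem projected_step_gain {L : ℝ} (hL : 0 < L) {x : ℝ} (hx : 0 ≤ x) (b : ℝ) :
    1 / (2 * L) * max (-b) 0 ^ 2 ≤
      b * (x - max (x - 1 / L * b) 0) - L / 2 * (x - max (x - 1 / L * b) 0) ^ 2 := by
  rcases le_total (x - 1 / L * b) 0 with hclip | hfree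
  · have hLx : L * x ≤ b := by
      rw [sub_nonpos, one_div_mul_eq_div, le_div_iff₀ hL] at hclip
      linarith
    have hb : max (-b) 0 = 0 := max_eq_right (by nlinarith)
    rw [max_eq_right hclip, hb]
    nlinarith
  · rw [max_eq_left hfree, sub_sub_cancel]
    have hsq : max (-b) 0 ^ 2 ≤ b ^ 2 := by
      simpa only [sq_abs] using
        pow_le_pow_left₀ (le_max_right (-b) 0) (max_le (neg_le_abs b) (abs_nonneg b)) 2
    calc 1 / (2 * L) * max (-b) 0 ^ 2 ≤ 1 / (2 * L) * b ^ 2 := by gcongr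
      _ = _ := by field_simp; ring

theorem stmt_7_general (m : ℕ) (L : ℝ) (hL : 0 < L)
    (a lam : Fin m → ℝ) (hlam : ∀ i, 0 ≤ lam i) :
    (1 / (2 * L)) * ∑ i, (max (-(a i)) 0) ^ 2 ≤
      (∑ i, a i * (lam i - max (lam i - (1 / L) * a i) 0)) -
        (L / 2) * ∑ i, (lam i - max (lam i - (1 / L) * a i) 0) ^ 2 := by
  rw [Finset.mul_sum, Finset.mul_sum, ← Finset.sum_sub_distrib]
  exact Finset.sum_le_sum fun i _ => projected_step_gain hL (hlam i) (a i)

theorem stmt_7 (m : ℕ) (hm : 1 ≤ m) (L : ℝ) (hL : 0 < L)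
    (a lam : Fin m → ℝ) (hlam : ∀ i, 0 ≤ lam i) :
    (1 / (2 * L)) * ∑ i, (max (-(a i)) 0) ^ 2 ≤
      (∑ i, a i * (lam i - max (lam i - (1 / L) * a i) 0)) -
        (L / 2) * ∑ i, (lam i - max (lam i - (1 / L) * a i) 0) ^ 2 :=
  stmt_7_general m L hL a lam hlam
end

section
/- Let m ≥ 1, μ > 0 and L_d ≥ 0. Let f : ℝ^m → ℝ be convex and differentiable with L_d-Lipschitz gradient on the nonnegative orthant ℝ^m_+, define g(λ) := f(λ) + (μ/2)·‖λ‖₂² and L := L_d + μ, and let λ* ∈ ℝ^m_+ satisfy g(λ*) ≤ g(ν) for all ν ∈ ℝ^m_+. Then for every λ ∈ ℝ^m_+, ⟨λ, ∇f(λ)⟩ ≤ (L/μ)·(g(λ) − g(λ*)). -/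
/-!
Put `g := f + (μ / 2) ‖·‖²` and `L := L_d + μ`, so that `u := ∇f λ + μ λ = ∇g λ` and
`⟨λ, ∇f λ⟩ = ⟨λ, u⟩ - μ ‖λ‖²`, while `∇g` is `L`-Lipschitz on the orthant. The projected gradient
step `y := max (λ - u / (2L)) 0` stays in the orthant, so `g λ* ≤ g y`, and the descent inequality
`g y ≤ g λ + ⟨u, y - λ⟩ + L ‖y - λ‖²` bounds `g λ - g λ*` from below. A one-variable inequality,
applied coordinatewise, shows that `L / μ` times this lower bound dominates `⟨λ, u⟩ - μ ‖λ‖²`.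
-/

open scoped RealInnerProductSpace NNReal
open InnerProductSpace

section

variable {E : Type*} [NormedAddCommGroup E] [InnerProductSpace ℝ E] [CompleteSpace E]

/-- Only the mean value inequality is used, hence the constant `K` rather than the sharp `K / 2`. -/
theorem Convex.le_add_inner_add_mul_norm_sq_of_lipschitzOnWith {s : Set E} (hs : Convex ℝ s)
    {g : E → ℝ} {g' : E → E} {K : ℝ≥0} (hg : ∀ x ∈ s, HasGradientWithinAt g (g' x) s x)
    (hlip : LipschitzOnWith K g' s) {x y : E} (hx : x ∈ s) (hy : y ∈ s) :
    g y ≤ g x + ⟪g' x, y - x⟫ + K * ‖y - x‖ ^ 2 := by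
  have hseg : segment ℝ x y ⊆ s := hs.segment_subset hx hy
  have hbound : ∀ z ∈ segment ℝ x y, ‖toDual ℝ E (g' z) - toDual ℝ E (g' x)‖ ≤ K * ‖y - x‖ := by
    intro z hz
    rw [← map_sub, LinearIsometryEquiv.norm_map]
    calc ‖g' z - g' x‖ ≤ K * ‖z - x‖ := hlip.norm_sub_le (hseg hz) hx
      _ ≤ K * ‖y - x‖ := by
        gcongr
        simpa only [dist_eq_norm, norm_sub_rev x] using
          (dist_add_dist_of_mem_segment hz).le.trans' (le_add_of_nonneg_right dist_nonneg)
  have hmv := (convex_segment x y).norm_image_sub_le_of_norm_hasFDerivWithin_le'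
    (fun z hz => (hasGradientWithinAt_iff_hasFDerivWithinAt.mp (hg z (hseg hz))).mono hseg)
    hbound (left_mem_segment ℝ x y) (right_mem_segment ℝ x y)
  rw [toDual_apply_apply, Real.norm_eq_abs] at hmv
  nlinarith [le_abs_self (g y - g x - ⟪g' x, y - x⟫)]

theorem HasGradientAt.add_mul_norm_sq {f : E → ℝ} {f' x : E} (hf : HasGradientAt f f' x)
    (c : ℝ) : HasGradientAt (fun y => f y + c * ‖y‖ ^ 2) (f' + (2 * c) • x) x := by
  rw [hasGradientAt_iff_hasFDerivAt] at hf ⊢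
  refine (hf.add ((hasStrictFDerivAt_norm_sq x).hasFDerivAt.const_mul c)).congr_fderiv ?_
  ext v
  simp only [map_add, map_smul, add_apply, smul_apply, toDual_apply_apply, innerSL_apply_apply,
    smul_eq_mul, nsmul_eq_mul]
  ring

end

/-- The witness is the projected gradient step `b = max (a - w / (2L)) 0`, which maximises
`-(w (b - a) + L (b - a)²)` over `b ≥ 0`. -/
theorem exists_nonneg_mul_sub_mul_sq_le {μ L a : ℝ} (hμ : 0 < μ) (hμL : μ ≤ L) (ha : 0 ≤ a)
    (w : ℝ) : ∃ b, 0 ≤ b ∧ a * w - μ * a ^ 2 ≤ L / μ * -(w * (b - a) + L * (b - a) ^ 2) := by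
  have hL : 0 < L := hμ.trans_le hμL
  refine ⟨max (a - w / (2 * L)) 0, le_max_right _ _, ?_⟩
  rw [div_mul_eq_mul_div, le_div_iff₀ hμ]
  rcases le_total (w / (2 * L)) a with h | h
  · rw [max_eq_left (by linarith)]
    have hw : w / (2 * L) * (2 * L) = w := by field_simp
    nlinarith [sq_nonneg (w - 2 * μ * a)]
  · rw [max_eq_right (by linarith)]
    have hw : 2 * L * a ≤ w := by rwa [le_div_iff₀ (by positivity), mul_comm] at h
    have hw' : 0 ≤ w - (L + μ) * a := by nlinarith
    nlinarith [mul_nonneg (mul_nonneg (sub_nonneg.mpr hμL) ha) hw']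

theorem EuclideanSpace.exists_nonneg_inner_sub_mul_norm_sq_le {ι : Type*} [Fintype ι]
    {μ L : ℝ} (hμ : 0 < μ) (hμL : μ ≤ L) {x : EuclideanSpace ℝ ι} (hx : ∀ i, 0 ≤ x i)
    (u : EuclideanSpace ℝ ι) :
    ∃ y : EuclideanSpace ℝ ι, (∀ i, 0 ≤ y i) ∧
      ⟪x, u⟫ - μ * ‖x‖ ^ 2 ≤ L / μ * -(⟪u, y - x⟫ + L * ‖y - x‖ ^ 2) := by
  choose b hb0 hb using fun i => exists_nonneg_mul_sub_mul_sq_le hμ hμL (hx i) (u i)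
  refine ⟨WithLp.toLp 2 b, hb0, ?_⟩
  have hsum : ∀ v w : EuclideanSpace ℝ ι, ⟪v, w⟫ = ∑ i, v i * w i := fun v w => by
    simp [EuclideanSpace.inner_eq_star_dotProduct, dotProduct, mul_comm]
  have hnorm : ∀ v : EuclideanSpace ℝ ι, ‖v‖ ^ 2 = ∑ i, v i ^ 2 := fun v => by
    simp [EuclideanSpace.norm_sq_eq]
  calc ⟪x, u⟫ - μ * ‖x‖ ^ 2 = ∑ i, (x i * u i - μ * x i ^ 2) := by
        rw [hsum, hnorm, Finset.sum_sub_distrib, Finset.mul_sum]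
    _ ≤ ∑ i, L / μ * -(u i * (b i - x i) + L * (b i - x i) ^ 2) :=
        Finset.sum_le_sum fun i _ => hb i
    _ = L / μ * -(⟪u, WithLp.toLp 2 b - x⟫ + L * ‖WithLp.toLp 2 b - x‖ ^ 2) := by
        simp only [hsum, hnorm, PiLp.sub_apply, ← Finset.mul_sum, Finset.sum_neg_distrib,
          Finset.sum_add_distrib, mul_comm (u _)]

theorem stmt_12_general (m : ℕ) (μ : ℝ) (hμ : 0 < μ) (Ld : ℝ) (hLd : 0 ≤ Ld)
    (f : EuclideanSpace ℝ (Fin m) → ℝ)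
    (hf : Differentiable ℝ f)
    (hlip : ∀ x : EuclideanSpace ℝ (Fin m), (∀ i, 0 ≤ x i) →
      ∀ y : EuclideanSpace ℝ (Fin m), (∀ i, 0 ≤ y i) →
      ‖gradient f x - gradient f y‖ ≤ Ld * ‖x - y‖)
    (lstar : EuclideanSpace ℝ (Fin m))
    (hmin : ∀ ν : EuclideanSpace ℝ (Fin m), (∀ i, 0 ≤ ν i) →
      f lstar + (μ / 2) * ‖lstar‖ ^ 2 ≤ f ν + (μ / 2) * ‖ν‖ ^ 2)
    (lam : EuclideanSpace ℝ (Fin m)) (hlam : ∀ i, 0 ≤ lam i) :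
    ∑ i, lam i * gradient f lam i ≤
      ((Ld + μ) / μ) *
        ((f lam + (μ / 2) * ‖lam‖ ^ 2) - (f lstar + (μ / 2) * ‖lstar‖ ^ 2)) := by
  set orthant : Set (EuclideanSpace ℝ (Fin m)) := {x | ∀ i, 0 ≤ x i}
  have horthant : Convex ℝ orthant := fun x hx y hy a b ha hb _ i => by
    simp only [PiLp.add_apply, PiLp.smul_apply, smul_eq_mul]
    exact add_nonneg (mul_nonneg ha (hx i)) (mul_nonneg hb (hy i))
  have hgrad (x) : HasGradientAt (fun y => f y + μ / 2 * ‖y‖ ^ 2) (gradient f x + μ • x) x := by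
    simpa [mul_div_cancel₀ μ two_ne_zero] using (hf x).hasGradientAt.add_mul_norm_sq (μ / 2)
  have hglip : LipschitzOnWith (⟨Ld + μ, by positivity⟩ : ℝ≥0)
      (fun x => gradient f x + μ • x) orthant := by
    refine LipschitzOnWith.of_dist_le_mul fun x hx y hy => ?_
    change _ ≤ (Ld + μ) * _
    rw [dist_eq_norm, dist_eq_norm, add_sub_add_comm, ← smul_sub, add_mul]
    refine (norm_add_le _ _).trans (add_le_add (hlip x hx y hy) ?_)
    rw [norm_smul, Real.norm_of_nonneg hμ.le]
  obtain ⟨y, hy, hkey⟩ := EuclideanSpace.exists_nonneg_inner_sub_mul_norm_sq_le hμ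
    (le_add_of_nonneg_left hLd) hlam (gradient f lam + μ • lam)
  have hdescent : f y + μ / 2 * ‖y‖ ^ 2 ≤ f lam + μ / 2 * ‖lam‖ ^ 2 +
      ⟪gradient f lam + μ • lam, y - lam⟫ + (Ld + μ) * ‖y - lam‖ ^ 2 :=
    horthant.le_add_inner_add_mul_norm_sq_of_lipschitzOnWith
      (fun x _ => (hasGradientAt_iff_hasFDerivAt.mp (hgrad x)).hasFDerivWithinAt) hglip hlam hy
  calc ∑ i, lam i * gradient f lam i
      = ⟪lam, gradient f lam + μ • lam⟫ - μ * ‖lam‖ ^ 2 := by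
        rw [inner_add_right, real_inner_smul_right, real_inner_self_eq_norm_sq,
          EuclideanSpace.inner_eq_star_dotProduct]
        simp [dotProduct, mul_comm]
    _ ≤ (Ld + μ) / μ * -(⟪gradient f lam + μ • lam, y - lam⟫ + (Ld + μ) * ‖y - lam‖ ^ 2) := hkey
    _ ≤ (Ld + μ) / μ * ((f lam + μ / 2 * ‖lam‖ ^ 2) - (f y + μ / 2 * ‖y‖ ^ 2)) := by
      gcongr; linarith
    _ ≤ (Ld + μ) / μ * ((f lam + μ / 2 * ‖lam‖ ^ 2) - (f lstar + μ / 2 * ‖lstar‖ ^ 2)) :=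
      mul_le_mul_of_nonneg_left (sub_le_sub_left (hmin y hy) _) (by positivity)

theorem stmt_12 (m : ℕ) (hm : 1 ≤ m) (μ : ℝ) (hμ : 0 < μ) (Ld : ℝ) (hLd : 0 ≤ Ld)
    (f : EuclideanSpace ℝ (Fin m) → ℝ)
    (hconv : ConvexOn ℝ Set.univ f) (hf : Differentiable ℝ f)
    (hlip : ∀ x : EuclideanSpace ℝ (Fin m), (∀ i, 0 ≤ x i) →
      ∀ y : EuclideanSpace ℝ (Fin m), (∀ i, 0 ≤ y i) →
      ‖gradient f x - gradient f y‖ ≤ Ld * ‖x - y‖)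
    (lstar : EuclideanSpace ℝ (Fin m)) (hstar : ∀ i, 0 ≤ lstar i)
    (hmin : ∀ ν : EuclideanSpace ℝ (Fin m), (∀ i, 0 ≤ ν i) →
      f lstar + (μ / 2) * ‖lstar‖ ^ 2 ≤ f ν + (μ / 2) * ‖ν‖ ^ 2)
    (lam : EuclideanSpace ℝ (Fin m)) (hlam : ∀ i, 0 ≤ lam i) :
    ∑ i, lam i * gradient f lam i ≤
      ((Ld + μ) / μ) *
        ((f lam + (μ / 2) * ‖lam‖ ^ 2) - (f lstar + (μ / 2) * ‖lstar‖ ^ 2)) :=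
  stmt_12_general m μ hμ Ld hLd f hf hlip lstar hmin lam hlam
end
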